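/- The graph F3 satisfies γ_e(F3) < γ(F3). -/

import Mathlib

open SimpleGraph

/-- `D` is a dominating set of `G`. -/
def IsDomSet {V : Type*} (G : SimpleGraph V) (D : Finset V) : Prop :=
  ∀ v : V, v ∉ D → ∃ u ∈ D, G.Adj u v

/-- The domination number of `G`. -/
noncomputable def domNum {V : Type*} (G : SimpleGraph V) [Fintype V] : ℕ :=
  sInf {n | ∃ D : Finset V, IsDomSet G D ∧ D.card = n}

open Classical in
/-- `D` contains exactly one endvertex of a path between `u` and `v`. -/
def endCond {V : Type*} (D : Finset V) (u v : V) : Prop :=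
  if u = v then u ∈ D else ((u ∈ D ∧ v ∉ D) ∨ (u ∉ D ∧ v ∈ D))

/-- `dist_{(G,D)}(u,v)`: the minimum length of a path in `G` between `u` and `v` such
that `D` contains exactly one endvertex and no internal vertex of the path;
`⊤` if no such path exists. -/
noncomputable def eDist {V : Type*} (G : SimpleGraph V) (D : Finset V) (u v : V) : ℕ∞ :=
  ⨅ (p : {p : G.Walk u v // p.IsPath ∧ endCond D u v ∧
      ∀ w ∈ p.support, w ≠ u → w ≠ v → w ∉ D}), (p.1.length : ℕ∞)

/-- `(1/2)^(d-1)` for `d : ℕ∞`, with `(1/2)^∞ = 0`. -/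
noncomputable def halfPow (d : ℕ∞) : ℝ :=
  if d = ⊤ then 0 else 2 * (1 / 2 : ℝ) ^ d.toNat

/-- The weight `w_{(G,D)}(u)`. -/
noncomputable def expWeight {V : Type*} (G : SimpleGraph V) (D : Finset V) (u : V) : ℝ :=
  ∑ v ∈ D, halfPow (eDist G D u v)

/-- `D` is an exponential dominating set of `G`. -/
def IsExpDomSet {V : Type*} (G : SimpleGraph V) (D : Finset V) : Prop :=
  ∀ u : V, 1 ≤ expWeight G D u

/-- The exponential domination number of `G`. -/
noncomputable def expDomNum {V : Type*} (G : SimpleGraph V) [Fintype V] : ℕ :=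
  sInf {n | ∃ D : Finset V, IsExpDomSet G D ∧ D.card = n}

/-- `G` is `H`-free: `G` has no induced subgraph isomorphic to `H`. -/
def Free {V W : Type*} (G : SimpleGraph V) (H : SimpleGraph W) : Prop :=
  ¬ Nonempty (H ↪g G)

/-- The graph on `Fin n` with the given edge list. -/
def graphOfList (n : ℕ) (l : List (Fin n × Fin n)) : SimpleGraph (Fin n) :=
  SimpleGraph.fromRel (fun a b => (a, b) ∈ l)

/-- The bull `B`. -/
def bull : SimpleGraph (Fin 5) := graphOfList 5 [(0,1),(1,2),(0,2),(0,3),(1,4)]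
/-- The diamond `D` (`K₄` minus an edge). -/
def diamond : SimpleGraph (Fin 4) := graphOfList 4 [(0,1),(0,2),(0,3),(1,2),(1,3)]
/-- The complete graph `K₄`. -/
def K4 : SimpleGraph (Fin 4) := ⊤
/-- The complete bipartite graph `K_{2,3}` with parts `{0,1}` and `{2,3,4}`. -/
def K23 : SimpleGraph (Fin 5) := graphOfList 5 [(0,2),(0,3),(0,4),(1,2),(1,3),(1,4)]
/-- The 2×3 grid `P₂ □ P₃`. -/
def P2P3 : SimpleGraph (Fin 2 × Fin 3) := (pathGraph 2) □ (pathGraph 3)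
/-- The path on 7 vertices. -/
def P7 : SimpleGraph (Fin 7) := pathGraph 7
/-- The cycle on 7 vertices. -/
def C7 : SimpleGraph (Fin 7) := cycleGraph 7
/-- `F₁`: the path `0-1-2` with pendant vertices `3,4,5` attached to `0,1,2`. -/
def F1 : SimpleGraph (Fin 6) := graphOfList 6 [(0,1),(1,2),(0,3),(1,4),(2,5)]
/-- `F₂`: a 4-cycle with a pendant path on 3 new vertices. -/
def F2 : SimpleGraph (Fin 7) := graphOfList 7 [(0,1),(1,2),(2,3),(3,0),(0,4),(4,5),(5,6)]
/-- `F₃`: a 4-cycle `0-1-2-3` and a 5-cycle `1-2-4-5-6` sharing exactly the edge `1-2`. -/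
def F3 : SimpleGraph (Fin 7) := graphOfList 7 [(0,1),(1,2),(2,3),(3,0),(2,4),(4,5),(5,6),(6,1)]
/-- `F₄`: two 4-cycles sharing exactly the vertex `0`. -/
def F4 : SimpleGraph (Fin 7) := graphOfList 7 [(0,1),(1,2),(2,3),(3,0),(0,4),(4,5),(5,6),(6,0)]
/-- `F₅`: vertices `u=0, v₁=1, v₂=2, w=3, a=4, b=5, z=6`. -/
def F5 : SimpleGraph (Fin 7) := graphOfList 7 [(0,1),(0,2),(1,3),(2,3),(1,4),(4,5),(5,2),(3,6)]

/-!
The set `{1, 4}` is an exponential dominating set of `F₃`: every vertex other than `3` lies in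
it or is adjacent to it, and `3` reaches `1` through `0` and `4` through `2`, collecting weight
`1/2 + 1/2`. On the other hand no two vertices dominate `F₃`, since no two closed neighbourhoods
cover all seven vertices.
-/

section Domination

variable {V : Type*} {G : SimpleGraph V}

instance [Fintype V] [DecidableEq V] [DecidableRel G.Adj] (D : Finset V) :
    Decidable (IsDomSet G D) := by
  unfold IsDomSet; infer_instance

lemma isDomSet_univ [Fintype V] : IsDomSet G Finset.univ :=
  fun v hv => absurd (Finset.mem_univ v) hv

lemma le_domNum [Fintype V] {k : ℕ} (h : ∀ D : Finset V, IsDomSet G D → k ≤ D.card) :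
    k ≤ domNum G :=
  le_csInf ⟨_, Finset.univ, isDomSet_univ, rfl⟩ (by rintro n ⟨D, hD, rfl⟩; exact h D hD)

lemma expDomNum_le_card [Fintype V] {D : Finset V} (h : IsExpDomSet G D) :
    expDomNum G ≤ D.card :=
  Nat.sInf_le ⟨D, h, rfl⟩

end Domination

section ExpWeight

lemma halfPow_nonneg (d : ℕ∞) : 0 ≤ halfPow d := by
  unfold halfPow; split_ifs <;> positivity

lemma two_mul_half_pow_le_halfPow {d : ℕ∞} {n : ℕ} (h : d ≤ n) :
    2 * (1 / 2 : ℝ) ^ n ≤ halfPow d := by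
  lift d to ℕ using ne_top_of_le_ne_top (ENat.natCast_ne_top n) h
  rw [halfPow, if_neg (ENat.natCast_ne_top d), ENat.toNat_natCast]
  gcongr 2 * ?_
  exact pow_le_pow_of_le_one (by norm_num) (by norm_num) (by exact_mod_cast h)

variable {V : Type*} {G : SimpleGraph V} {D : Finset V} {u v w x y : V}

lemma eDist_le_length (p : G.Walk u v) (hp : p.IsPath) (hend : endCond D u v)
    (hint : ∀ w ∈ p.support, w ≠ u → w ≠ v → w ∉ D) :
    eDist G D u v ≤ p.length :=
  iInf_le (fun q : {q : G.Walk u v // q.IsPath ∧ endCond D u v ∧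
      ∀ w ∈ q.support, w ≠ u → w ≠ v → w ∉ D} => (q.1.length : ℕ∞)) ⟨p, hp, hend, hint⟩

lemma endCond_of_notMem_of_mem (hu : u ∉ D) (hv : v ∈ D) : endCond D u v := by
  have huv : u ≠ v := by rintro rfl; exact hu hv
  classical
  simp only [endCond, if_neg huv]
  exact Or.inr ⟨hu, hv⟩

lemma eDist_self_eq_zero (hu : u ∈ D) : eDist G D u u = 0 := by
  classical
  refine nonpos_iff_eq_zero.mp (eDist_le_length Walk.nil Walk.IsPath.nil ?_ ?_)
  · rwa [endCond, if_pos rfl]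
  · simp

lemma eDist_le_one_of_adj (h : G.Adj u v) (hu : u ∉ D) (hv : v ∈ D) : eDist G D u v ≤ 1 :=
  eDist_le_length h.toWalk (by simpa using h.ne) (endCond_of_notMem_of_mem hu hv)
    (by simp +contextual)

lemma eDist_le_two_of_adj_of_adj (hux : G.Adj u x) (hxv : G.Adj x v) (hu : u ∉ D)
    (hx : x ∉ D) (hv : v ∈ D) : eDist G D u v ≤ 2 := by
  have huv : u ≠ v := by rintro rfl; exact hu hv
  refine eDist_le_length (.cons hux (.cons hxv .nil)) ?_ (endCond_of_notMem_of_mem hu hv) ?_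
  · simp [hux.ne, hxv.ne, huv]
  · simp +contextual [hx]

lemma halfPow_eDist_le_expWeight (hv : v ∈ D) : halfPow (eDist G D u v) ≤ expWeight G D u :=
  Finset.single_le_sum (fun w _ => halfPow_nonneg (eDist G D u w)) hv

lemma one_le_expWeight_of_mem (hu : u ∈ D) : 1 ≤ expWeight G D u :=
  calc (1 : ℝ) ≤ 2 * (1 / 2) ^ 0 := by norm_num
    _ ≤ halfPow (eDist G D u u) := two_mul_half_pow_le_halfPow (eDist_self_eq_zero hu).le
    _ ≤ expWeight G D u := halfPow_eDist_le_expWeight hu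

lemma one_le_expWeight_of_adj (h : G.Adj u v) (hu : u ∉ D) (hv : v ∈ D) :
    1 ≤ expWeight G D u :=
  calc (1 : ℝ) = 2 * (1 / 2) ^ 1 := by norm_num
    _ ≤ halfPow (eDist G D u v) := two_mul_half_pow_le_halfPow (eDist_le_one_of_adj h hu hv)
    _ ≤ expWeight G D u := halfPow_eDist_le_expWeight hv

lemma one_le_expWeight_of_two_paths (hux : G.Adj u x) (hxv : G.Adj x v) (huy : G.Adj u y)
    (hyw : G.Adj y w) (hu : u ∉ D) (hx : x ∉ D) (hy : y ∉ D) (hv : v ∈ D) (hw : w ∈ D)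
    (hvw : v ≠ w) : 1 ≤ expWeight G D u := by
  classical
  have hsum : halfPow (eDist G D u v) + halfPow (eDist G D u w) ≤ expWeight G D u := by
    rw [expWeight, ← Finset.sum_pair (f := fun z => halfPow (eDist G D u z)) hvw]
    exact Finset.sum_le_sum_of_subset_of_nonneg (by simp [Finset.insert_subset_iff, hv, hw])
      (fun z _ _ => halfPow_nonneg _)
  have hv' := two_mul_half_pow_le_halfPow (eDist_le_two_of_adj_of_adj hux hxv hu hx hv)
  have hw' := two_mul_half_pow_le_halfPow (eDist_le_two_of_adj_of_adj huy hyw hu hy hw)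
  norm_num at hv' hw'
  linarith

end ExpWeight

instance : DecidableRel F3.Adj := fun a b =>
  decidable_of_iff' _ (SimpleGraph.fromRel_adj _ a b)

lemma isExpDomSet_F3 : IsExpDomSet F3 {1, 4} := by
  intro u
  fin_cases u
  · apply one_le_expWeight_of_adj (v := 1) <;> decide
  · apply one_le_expWeight_of_mem; decide
  · apply one_le_expWeight_of_adj (v := 1) <;> decide
  · apply one_le_expWeight_of_two_paths (x := 0) (v := 1) (y := 2) (w := 4) <;> decide
  · apply one_le_expWeight_of_mem; decide
  · apply one_le_expWeight_of_adj (v := 4) <;> decide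
  · apply one_le_expWeight_of_adj (v := 1) <;> decide

set_option maxRecDepth 4000 in
lemma three_le_card_of_isDomSet_F3 : ∀ D : Finset (Fin 7), IsDomSet F3 D → 3 ≤ D.card := by
  decide

/-- `γₑ(F₃) < γ(F₃)`. -/
theorem expDomNum_F3_lt_domNum_F3 : expDomNum F3 < domNum F3 :=
  calc expDomNum F3 ≤ 2 := expDomNum_le_card isExpDomSet_F3
    _ < 3 := by norm_num
    _ ≤ domNum F3 := le_domNum three_le_card_of_isDomSet_F3
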